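/- arXiv:2405.14400 — 6 statements merged into one kernel-verified Lean document; each statement's English description precedes it below -/
import Mathlib

section
/- For any z ∈ ℝ^n with n ≥ 2 and index i, the gap between the sigmoid upper and lower bounds of softmax equals Sig(z_i - M_i) - Sig(z_i - M_i - log(n-1)) = α(n-2)/((α+1)((n-1)α+1)), where M_i = max_{j≠i} z_j and α = e^{-z_i + M_i}. -/
noncomputable def Sig (x : ℝ) : ℝ := 1 / (1 + Real.exp (-x))

theorem erase_nonempty {n : ℕ} (hn : 2 ≤ n) (i : Fin n) :
    (Finset.univ.erase i).Nonempty := by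
  haveI : Nontrivial (Fin n) := Fin.nontrivial_iff_two_le.mpr hn
  obtain ⟨j, hj⟩ := exists_ne i
  exact ⟨j, Finset.mem_erase.mpr ⟨hj, Finset.mem_univ j⟩⟩

theorem sig_gap_eq {n : ℕ} (hn : 2 ≤ n) (z : Fin n → ℝ) (i : Fin n) (M α : ℝ)
    (hM : M = (Finset.univ.erase i).sup' (erase_nonempty hn i) z)
    (hα : α = Real.exp (-z i + M)) :
    Sig (z i - M) - Sig (z i - M - Real.log (n - 1)) =
      α * (n - 2) / ((α + 1) * ((n - 1) * α + 1)) := by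
  have hn1 : (0:ℝ) < (n:ℝ) - 1 := by
    have : (2:ℝ) ≤ n := by exact_mod_cast hn
    linarith
  have hαpos : 0 < α := hα ▸ Real.exp_pos _
  have h1 : Real.exp (-(z i - M)) = α := by
    rw [hα]; ring_nf
  have h2 : Real.exp (-(z i - M - Real.log ((n:ℝ) - 1))) = ((n:ℝ) - 1) * α := by
    rw [show -(z i - M - Real.log ((n:ℝ) - 1)) = Real.log ((n:ℝ)-1) + (-z i + M) by ring,
      Real.exp_add, Real.exp_log hn1, hα]
  unfold Sig
  rw [h1, h2]
  have d1 : (1:ℝ) + α ≠ 0 := by linarith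
  have d2 : (1:ℝ) + ((n:ℝ)-1)*α ≠ 0 := by nlinarith
  have d3 : α + 1 ≠ 0 := by linarith
  have d4 : ((n:ℝ)-1)*α + 1 ≠ 0 := by nlinarith
  field_simp
  ring
end

section
/- Let n ≥ 2 be a natural number and define ζ_n(m) = m(n-2)/((m+1)((n-1)m+1)) for m > 0. Then for all m ∈ (0,1], ζ_n(m) ≤ (n-2)/(√(n-1)+1)^2. -/
theorem zeta_le_max {n : ℕ} (hn : 2 ≤ n) :
    ∀ m : ℝ, 0 < m → m ≤ 1 →
      m * ((n : ℝ) - 2) / ((m + 1) * (((n : ℝ) - 1) * m + 1)) ≤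
        ((n : ℝ) - 2) / (Real.sqrt ((n : ℝ) - 1) + 1) ^ 2 := by
  intro m hm hm1
  have hn2 : (2 : ℝ) ≤ (n : ℝ) := by exact_mod_cast hn
  have h1 : (0 : ℝ) ≤ (n : ℝ) - 1 := by linarith
  have hs : Real.sqrt ((n : ℝ) - 1) ^ 2 = (n : ℝ) - 1 := Real.sq_sqrt h1
  have hs0 : 0 ≤ Real.sqrt ((n : ℝ) - 1) := Real.sqrt_nonneg _
  have hd1 : 0 < (m + 1) * (((n : ℝ) - 1) * m + 1) :=
    mul_pos (by linarith) (by nlinarith)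
  have hd2 : 0 < (Real.sqrt ((n : ℝ) - 1) + 1) ^ 2 := by positivity
  rw [div_le_div_iff₀ hd1 hd2]
  have h3 : ((n:ℝ)-2) * m^2 * (Real.sqrt ((n:ℝ)-1))^2
      = ((n:ℝ)-2) * m^2 * ((n:ℝ)-1) := by rw [hs]
  nlinarith [mul_nonneg (by linarith : (0:ℝ) ≤ (n : ℝ) - 2)
      (sq_nonneg (Real.sqrt ((n : ℝ) - 1) * m - 1)), h3, hs, hs0]
end

section
/- Let z ∈ ℝ^n with n ≥ 2, and suppose z_i = max(z_1, ..., z_n). Then the difference between the sigmoid upper bound and the sigmoid lower bound of softmax(z)_i satisfies Sig(z_i - max_{j≠i} z_j) - Sig(z_i - max_{j≠i} z_j - log(n-1)) ≤ (n-2)/(√(n-1)+1)². -/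
theorem sig_gap_le {n : ℕ} (hn : 2 ≤ n) (z : Fin n → ℝ) (i : Fin n)
    (hi : ∀ j, z j ≤ z i) :
    Sig (z i - (Finset.univ.erase i).sup' (erase_nonempty hn i) z) -
        Sig (z i - (Finset.univ.erase i).sup' (erase_nonempty hn i) z -
          Real.log ((n : ℝ) - 1)) ≤
      ((n : ℝ) - 2) / (Real.sqrt ((n : ℝ) - 1) + 1) ^ 2 := by
  set m := (Finset.univ.erase i).sup' (erase_nonempty hn i) z with hm
  have hN : (1:ℝ) ≤ (n:ℝ) - 1 := by
    have : (2:ℝ) ≤ (n:ℝ) := by exact_mod_cast hn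
    linarith
  have hmle : m ≤ z i := Finset.sup'_le _ _ fun j _ => hi j
  set d := z i - m with hd
  have hd0 : 0 ≤ d := by simp only [hd]; linarith
  set a := Real.exp (-d) with ha
  have ha0 : 0 < a := Real.exp_pos _
  have ha1 : a ≤ 1 := Real.exp_le_one_iff.mpr (by linarith)
  have hexp : Real.exp (-(d - Real.log ((n:ℝ)-1))) = ((n:ℝ)-1) * a := by
    rw [neg_sub, sub_eq_add_neg, Real.exp_add, Real.exp_log (by linarith)]
  set s := Real.sqrt ((n:ℝ)-1) with hs
  have hs2 : s ^ 2 = (n:ℝ) - 1 := Real.sq_sqrt (by linarith)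
  have hs1 : 1 ≤ s := by nlinarith [Real.sqrt_nonneg ((n:ℝ)-1)]
  have hn2 : (0:ℝ) ≤ (n:ℝ) - 2 := by linarith
  have h1 : (0:ℝ) < 1 + a := by linarith
  have h2 : (0:ℝ) < 1 + ((n:ℝ)-1) * a := by nlinarith
  have h3 : (0:ℝ) < (s + 1) ^ 2 := by positivity
  have key : (1 - s * a) ^ 2 ≥ 0 := sq_nonneg _
  rw [Sig, Sig, hexp]
  rw [div_sub_div _ _ (ne_of_gt h1) (ne_of_gt h2), div_le_div_iff₀ (by positivity) h3]
  have key2 : 0 ≤ ((n:ℝ)-2) * (1 - 2*s*a + ((n:ℝ)-1)*a^2) := by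
    have h4 : ((n:ℝ)-2) * (1 - 2*s*a + ((n:ℝ)-1)*a^2) = ((n:ℝ)-2) * (1 - s*a)^2 := by
      rw [← hs2]; ring
    rw [h4]; exact mul_nonneg hn2 key
  nlinarith [key2, hs2, mul_nonneg hn2 ha0.le]
end

section
/- Softmax error bound: Let ŝoftmax(z)_i = Ŝig(z_i - max_{j≠i} z_j - log(n-1)) - δ be the approximated softmax, where Ŝig satisfies |Ŝig(x) - Sig(x)| ≤ δ for all x. If z_i = max(z_1,...,z_n) with n ≥ 2, then softmax(z)_i - ŝoftmax(z)_i ≤ (n-2)/(√(n-1)+1)² + 2δ. -/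
noncomputable def softmax {n : ℕ} (z : Fin n → ℝ) (i : Fin n) : ℝ :=
  Real.exp (z i) / ∑ j, Real.exp (z j)

theorem softmax_error_bound {n : ℕ} (hn : 2 ≤ n) (z : Fin n → ℝ) (i : Fin n)
    (hi : ∀ j, z j ≤ z i) (Sighat : ℝ → ℝ) (δ : ℝ) (hδ : 0 ≤ δ)
    (happrox : ∀ x, |Sighat x - Sig x| ≤ δ) :
    softmax z i -
        (Sighat (z i - (Finset.univ.erase i).sup' (erase_nonempty hn i) z -
            Real.log ((n : ℝ) - 1)) - δ) ≤
      ((n : ℝ) - 2) / (Real.sqrt ((n : ℝ) - 1) + 1) ^ 2 + 2 * δ := by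
  set m := (Finset.univ.erase i).sup' (erase_nonempty hn i) z with hm
  set x := z i - m - Real.log ((n : ℝ) - 1) with hxdef
  have hc1 : (1:ℝ) ≤ (n:ℝ) - 1 := by
    have : (2:ℝ) ≤ (n:ℝ) := by exact_mod_cast hn
    linarith
  set c : ℝ := (n:ℝ) - 1 with hcdef
  set a : ℝ := Real.sqrt c with hadef
  have ha2 : a ^ 2 = c := Real.sq_sqrt (by linarith)
  have ha1 : (1:ℝ) ≤ a := by
    rw [show (1:ℝ) = Real.sqrt 1 by simp, hadef]
    exact Real.sqrt_le_sqrt hc1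
  set t : ℝ := Real.exp (m - z i) with htdef
  have ht0 : 0 < t := Real.exp_pos _
  have hmzi : m ≤ z i := Finset.sup'_le _ z fun j _ => hi j
  have ht1 : t ≤ 1 := Real.exp_le_one_iff.mpr (by linarith)
  -- Sig x = 1/(1 + c*t)
  have hSig : Sig x = 1 / (1 + c * t) := by
    unfold Sig
    have h1 : Real.exp (-x) = c * t := by
      rw [hxdef, show -(z i - m - Real.log c) = Real.log c + (m - z i) by ring,
        Real.exp_add, Real.exp_log (by linarith)]
    rw [h1]
  -- softmax bound
  have key1 : softmax z i ≤ 1 / (1 + t) := by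
    unfold softmax
    obtain ⟨j, hj, hmj⟩ := Finset.exists_mem_eq_sup' (erase_nonempty hn i) z
    have hTge : Real.exp (z i) + Real.exp m ≤ ∑ j, Real.exp (z j) := by
      rw [← Finset.add_sum_erase Finset.univ (fun j => Real.exp (z j)) (Finset.mem_univ i)]
      have : Real.exp m ≤ ∑ k ∈ Finset.univ.erase i, Real.exp (z k) := by
        rw [hm, hmj]
        exact Finset.single_le_sum (fun k _ => (Real.exp_pos (z k)).le) hj
      linarith
    have heq : (1:ℝ) / (1 + t) = Real.exp (z i) / (Real.exp (z i) + Real.exp m) := by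
      rw [htdef, Real.exp_sub]
      have h := (Real.exp_pos (z i)).ne'
      field_simp
    rw [heq]
    gcongr
  -- algebraic inequality
  have key3 : 1 / (1 + t) - 1 / (1 + c * t) ≤ (c - 1) / (a + 1) ^ 2 := by
    have h1 : (0:ℝ) < 1 + t := by linarith
    have h2 : (0:ℝ) < 1 + c * t := by nlinarith
    rw [div_sub_div _ _ h1.ne' h2.ne', div_le_div_iff₀ (by positivity) (by positivity), ← ha2]
    nlinarith [mul_nonneg (by nlinarith : (0:ℝ) ≤ a ^ 2 - 1) (sq_nonneg (1 - a * t))]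
  have key2 : Sig x - Sighat x ≤ δ := by
    have := abs_sub_le_iff.mp (happrox x)
    linarith [this.2]
  have hn2 : (n:ℝ) - 2 = c - 1 := by rw [hcdef]; ring
  rw [hn2]
  have : softmax z i - Sig x ≤ (c - 1) / (a + 1) ^ 2 := by
    rw [hSig]; linarith
  linarith
end

section
/- The approximated softmax is a lower bound on the true softmax: if z_i = max(z_1,...,z_n), n ≥ 2, and |Ŝig(x) - Sig(x)| ≤ δ for all x, then ŝoftmax(z)_i = Ŝig(z_i - max_{j≠i} z_j - log(n-1)) - δ ≤ softmax(z)_i. -/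
theorem approx_softmax_le {n : ℕ} (hn : 2 ≤ n) (z : Fin n → ℝ) (i : Fin n)
    (hi : ∀ j, z j ≤ z i) (Sighat : ℝ → ℝ) (δ : ℝ) (hδ : 0 ≤ δ)
    (happrox : ∀ x, |Sighat x - Sig x| ≤ δ) :
    Sighat (z i - (Finset.univ.erase i).sup' (erase_nonempty hn i) z -
        Real.log ((n : ℝ) - 1)) - δ ≤ softmax z i := by
  set M := (Finset.univ.erase i).sup' (erase_nonempty hn i) z with hM
  set x := z i - M - Real.log ((n : ℝ) - 1) with hx
  have hn1 : (0 : ℝ) < (n : ℝ) - 1 := by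
    have : (2 : ℝ) ≤ (n : ℝ) := by exact_mod_cast hn
    linarith
  have h1 : Sighat x - δ ≤ Sig x := by
    have := abs_le.mp (happrox x)
    linarith [this.1, this.2]
  suffices h2 : Sig x ≤ softmax z i by linarith
  have hS : (∑ j, Real.exp (z j)) =
      Real.exp (z i) + ∑ j ∈ Finset.univ.erase i, Real.exp (z j) := by
    rw [← Finset.add_sum_erase _ _ (Finset.mem_univ i)]
  have hSpos : (0 : ℝ) < ∑ j, Real.exp (z j) :=
    Finset.sum_pos (fun j _ => Real.exp_pos _) ⟨i, Finset.mem_univ i⟩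
  have hcard : (Finset.univ.erase i).card = n - 1 := by
    rw [Finset.card_erase_of_mem (Finset.mem_univ i)]
    simp
  have hbound : ∑ j ∈ Finset.univ.erase i, Real.exp (z j) ≤
      ((n : ℝ) - 1) * Real.exp M := by
    have := Finset.sum_le_card_nsmul (Finset.univ.erase i)
      (fun j => Real.exp (z j)) (Real.exp M)
      (fun j hj => Real.exp_le_exp.mpr (Finset.le_sup' z hj))
    rw [hcard, nsmul_eq_mul] at this
    have hc : ((n - 1 : ℕ) : ℝ) = (n : ℝ) - 1 := by
      have : 1 ≤ n := le_trans (by norm_num) hn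
      push_cast [this]; ring
    rw [hc] at this
    exact this
  have hexpx : Real.exp (z i) * Real.exp (-x) = ((n : ℝ) - 1) * Real.exp M := by
    rw [← Real.exp_add]
    have : z i + -x = M + Real.log ((n : ℝ) - 1) := by rw [hx]; ring
    rw [this, Real.exp_add, Real.exp_log hn1]
    ring
  rw [Sig, softmax, div_le_div_iff₀ (by positivity) hSpos]
  calc 1 * (∑ j, Real.exp (z j))
      = Real.exp (z i) + ∑ j ∈ Finset.univ.erase i, Real.exp (z j) := by
        rw [one_mul, hS]
    _ ≤ Real.exp (z i) + ((n : ℝ) - 1) * Real.exp M := by linarith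
    _ = Real.exp (z i) * (1 + Real.exp (-x)) := by rw [mul_add, mul_one, hexpx]
end

section
/- Soundness of confidence-based 2-safety: Let f, f̂ : X → probability vectors over n classes, with conf(f̂(x)) ≤ conf(f(x)) ≤ conf(f̂(x)) + b for some bound b ≥ 0 whenever conf(f̂(x)) > 1/2, and class(f̂(x)) = class(f(x)) whenever conf(f̂(x)) > 1/2. Fix a relation cond on pairs of inputs and a threshold κ. If for all x, x' with cond(x,x') and conf(f̂(x)) > κ − b we have class(f̂(x)) = class(f̂(x')), then for all x, x' with cond(x,x'), conf(f(x)) > κ, conf(f̂(x)) > 1/2, and conf(f̂(x')) > 1/2, we have class(f(x)) = class(f(x')). -/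
theorem soundness {X : Type*} {n : ℕ} (conf confHat : X → ℝ)
    (cls clsHat : X → Fin n) (b κ : ℝ) (hb : 0 ≤ b)
    (hconf : ∀ x, 1 / 2 < confHat x → confHat x ≤ conf x ∧ conf x ≤ confHat x + b)
    (hclass : ∀ x, 1 / 2 < confHat x → clsHat x = cls x)
    (cond : X → X → Prop)
    (hsafe : ∀ x x', cond x x' → κ - b < confHat x → clsHat x = clsHat x') :
    ∀ x x', cond x x' → κ < conf x → 1 / 2 < confHat x → 1 / 2 < confHat x' →
      cls x = cls x' := by
  intro x x' hc hκ hx hx'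
  have h1 := (hconf x hx).2
  have h2 := hsafe x x' hc (by linarith)
  rw [← hclass x hx, ← hclass x' hx', h2]
end
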